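/- arXiv:1208.6384 — 3 statements merged into one kernel-verified Lean document; each statement's English description precedes it below -/
import Mathlib

section
/- If a sequence (X_n) of centered jointly Gaussian real random variables converges in L² to Y with Var(X_n) = v > 0 for all n and Cov(X_n, X_m) → 0 as m → ∞ for each fixed n, then Y has variance v and Cov(X_n, Y) = 0 for all n; hence Y is independent of σ(X_n : n), contradicting measurability of Y with respect to σ(X_n : n). Thus no such L²-convergent subsequence exists. -/
open MeasureTheory ProbabilityTheory Filter

noncomputable section

/-! In `L²` the centered variables `X n` are vectors whose inner products are covariances.
A limit `Y` of `X (φ k)` is orthogonal to every `X (φ k)`, since each of them is asymptotically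
orthogonal to the tail of the sequence; being itself a limit of these vectors, `Y` is orthogonal
to itself, so `Y = 0`. But then `‖X (φ k)‖² = v` would tend to `0`. -/

def cov {Ω : Type*} [MeasurableSpace Ω] (P : Measure Ω) (X Y : Ω → ℝ) : ℝ :=
  ∫ ω, (X ω - ∫ a, X a ∂P) * (Y ω - ∫ a, Y a ∂P) ∂P

theorem eq_zero_of_tendsto_of_tendsto_inner_zero {𝕜 E : Type*} [RCLike 𝕜]
    [NormedAddCommGroup E] [InnerProductSpace 𝕜 E] {x : ℕ → E} {y : E}
    (hxy : Tendsto x atTop (nhds y))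
    (horth : ∀ k, Tendsto (fun j => inner 𝕜 (x k) (x j)) atTop (nhds 0)) : y = 0 := by
  have hy_orth : ∀ k, inner 𝕜 (x k) y = 0 := fun k =>
    tendsto_nhds_unique (tendsto_const_nhds.inner hxy) (horth k)
  have hyy : inner 𝕜 y y = 0 := by
    refine tendsto_nhds_unique (hxy.inner tendsto_const_nhds) ?_
    simp only [hy_orth, tendsto_const_nhds]
  exact inner_self_eq_zero.mp hyy

theorem cov_eq_inner_toLp {Ω : Type*} [MeasurableSpace Ω] {P : Measure Ω} {X Y : Ω → ℝ}
    (hX : MemLp X 2 P) (hY : MemLp Y 2 P) (hX0 : ∫ ω, X ω ∂P = 0) (hY0 : ∫ ω, Y ω ∂P = 0) :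
    cov P X Y = inner ℝ (hX.toLp X) (hY.toLp Y) := by
  rw [cov, hX0, hY0, L2.inner_def]
  refine integral_congr_ae ?_
  filter_upwards [hX.coeFn_toLp, hY.coeFn_toLp] with ω hXω hYω
  simp [hXω, hYω, mul_comm]

theorem cov_self_eq_variance {Ω : Type*} [MeasurableSpace Ω] {P : Measure Ω} {X : Ω → ℝ}
    (hX : AEMeasurable X P) : cov P X X = variance X P :=
  covariance_self hX

theorem stmt2_general {Ω : Type*} [MeasurableSpace Ω] (P : Measure Ω)
    (X : ℕ → Ω → ℝ) (v : ℝ) (hv : 0 < v)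
    (hL2 : ∀ n, MemLp (X n) 2 P)
    (hcentered : ∀ n, ∫ ω, X n ω ∂P = 0)
    (hvar : ∀ n, variance (X n) P = v)
    (hcov : ∀ n, Tendsto (fun m => cov P (X n) (X m)) atTop (nhds 0)) :
    ¬ ∃ (φ : ℕ → ℕ) (Y : Ω → ℝ), StrictMono φ ∧ MemLp Y 2 P ∧
      Tendsto (fun k => eLpNorm (fun ω => X (φ k) ω - Y ω) 2 P) atTop (nhds 0) := by
  rintro ⟨φ, Y, hφ, hY, hconv⟩
  set F : ℕ → Lp ℝ 2 P := fun k => (hL2 (φ k)).toLp (X (φ k))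
  have hF_inner : ∀ k j, inner ℝ (F k) (F j) = cov P (X (φ k)) (X (φ j)) := fun k j =>
    (cov_eq_inner_toLp _ _ (hcentered _) (hcentered _)).symm
  have hF_tendsto : Tendsto F atTop (nhds (hY.toLp Y)) :=
    (Lp.tendsto_Lp_iff_tendsto_eLpNorm'' _ (fun k => hL2 (φ k)) Y hY).mpr hconv
  have hlim_zero : hY.toLp Y = 0 := by
    refine eq_zero_of_tendsto_of_tendsto_inner_zero (𝕜 := ℝ) hF_tendsto fun k => ?_
    simpa only [hF_inner, Function.comp_def] using (hcov (φ k)).comp hφ.tendsto_atTop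
  have hF_norm : ∀ k, inner ℝ (F k) (F k) = v := fun k => by
    rw [hF_inner, cov_self_eq_variance (hL2 _).aemeasurable, hvar]
  have hv_zero : Tendsto (fun _ : ℕ => v) atTop (nhds 0) := by
    simpa only [hF_norm, hlim_zero, inner_zero_left] using hF_tendsto.inner (𝕜 := ℝ) hF_tendsto
  exact hv.ne' (tendsto_nhds_unique tendsto_const_nhds hv_zero)

/-- If `(X n)` is a sequence of centered jointly Gaussian real random variables with
`Var (X n) = v > 0` for all `n` and `Cov (X n) (X m) → 0` as `m → ∞` for each fixed `n`,
then no subsequence of `(X n)` converges in `L²`. -/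
theorem stmt2 {Ω : Type*} [MeasurableSpace Ω] (P : Measure Ω) [IsProbabilityMeasure P]
    (X : ℕ → Ω → ℝ) (v : ℝ) (hv : 0 < v)
    (hmeas : ∀ n, Measurable (X n)) (hL2 : ∀ n, MemLp (X n) 2 P)
    (hgauss : ∀ (s : Finset ℕ) (c : ℕ → ℝ), ∃ (m : ℝ) (w : NNReal),
      Measure.map (fun ω => ∑ i ∈ s, c i * X i ω) P = gaussianReal m w)
    (hcentered : ∀ n, ∫ ω, X n ω ∂P = 0)
    (hvar : ∀ n, variance (X n) P = v)
    (hcov : ∀ n, Tendsto (fun m => cov P (X n) (X m)) atTop (nhds 0)) :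
    ¬ ∃ (φ : ℕ → ℕ) (Y : Ω → ℝ), StrictMono φ ∧ MemLp Y 2 P ∧
      Tendsto (fun k => eLpNorm (fun ω => X (φ k) ω - Y ω) 2 P) atTop (nhds 0) :=
  stmt2_general P X v hv hL2 hcentered hvar hcov
end
end

section
/- (Abstract non-almost-periodicity lemma) Let X : ℝ → L²(Ω; E) be a continuous square-integrable E-valued process with (‖X_t‖²)_{t∈ℝ} uniformly integrable. Suppose there exists a sequence t_n → ∞ such that for every continuous linear functional x* on E and every n, lim_{m→∞} Cov(⟨x*, X_{t_n}⟩, ⟨x*, X_{t_m}⟩) = 0, and lim inf_{m→∞} Var(‖X_{t_m}‖) > 0. Then the map t ↦ X_t from ℝ to L²(Ω; E) is not almost periodic in Bohr's sense. -/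
/-!
A continuous Bohr almost periodic map has totally bounded range, so in the complete space `L²`
the sequence `X (t n)` has a convergent subsequence, with limit `Y`. Covariance is continuous on
`L² × L²`, so decorrelation along `t` passes to the limit: `Cov(⟨x*, X (t n)⟩, ⟨x*, Y⟩) = 0` for
every `n`, and then `Var ⟨x*, Y⟩ = 0`. Hence every functional of `Y` is a.s. constant, and as `E`
is separable, `Y` itself is a.s. constant. Then `Var ‖X (t n)‖ → Var ‖Y‖ = 0` along the
subsequence, contradicting the positive `liminf`.
-/

open MeasureTheory ProbabilityTheory Filter

noncomputable section

/-- Bohr almost periodicity for a function into a (pseudo)metric space. -/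
def BohrAlmostPeriodic {α : Type*} [PseudoMetricSpace α] (f : ℝ → α) : Prop :=
  ∀ ε > 0, ∃ l > 0, ∀ a : ℝ, ∃ τ ∈ Set.Icc a (a + l), ∀ t : ℝ,
    dist (f (t + τ)) (f t) ≤ ε

open scoped InnerProductSpace Topology

namespace BohrAlmostPeriodic

variable {α : Type*} [PseudoMetricSpace α] {f : ℝ → α}

theorem totallyBounded_range (hc : Continuous f) (hf : BohrAlmostPeriodic f) :
    TotallyBounded (Set.range f) := by
  rw [Metric.totallyBounded_iff]
  intro ε hε
  obtain ⟨l, -, hl⟩ := hf (ε / 3) (by positivity)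
  obtain ⟨s, hs, hcover⟩ := Metric.totallyBounded_iff.1
    ((isCompact_Icc (a := 0) (b := l)).image hc).totallyBounded (ε / 3) (by positivity)
  refine ⟨s, hs, ?_⟩
  rintro _ ⟨u, rfl⟩
  obtain ⟨τ, hτ, hdist⟩ := hl (-u)
  have hmem : f (u + τ) ∈ ⋃ y ∈ s, Metric.ball y (ε / 3) :=
    hcover ⟨u + τ, ⟨by linarith [hτ.1], by linarith [hτ.2]⟩, rfl⟩
  simp only [Set.mem_iUnion, Metric.mem_ball, exists_prop] at hmem ⊢
  obtain ⟨y, hy, hball⟩ := hmem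
  refine ⟨y, hy, ?_⟩
  calc dist (f u) y ≤ dist (f (u + τ)) (f u) + dist (f (u + τ)) y := dist_triangle_left _ _ _
    _ < ε := by linarith [hdist u]

theorem exists_tendsto_subseq [CompleteSpace α] (hc : Continuous f) (hf : BohrAlmostPeriodic f)
    (t : ℕ → ℝ) : ∃ y : α, ∃ φ : ℕ → ℕ, StrictMono φ ∧ Tendsto (f ∘ t ∘ φ) atTop (𝓝 y) := by
  obtain ⟨y, -, φ, hφ, hlim⟩ := ((hf.totallyBounded_range hc).closure.isCompact_of_isClosed
    isClosed_closure).tendsto_subseq fun n => subset_closure (Set.mem_range_self (t n))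
  exact ⟨y, φ, hφ, hlim⟩

end BohrAlmostPeriodic

section Covariance

variable {Ω : Type*} [MeasurableSpace Ω] {μ : Measure Ω}

theorem covariance_congr {X X' Y Y' : Ω → ℝ} (hX : X =ᵐ[μ] X') (hY : Y =ᵐ[μ] Y') :
    covariance X Y μ = covariance X' Y' μ := by
  simp only [covariance, integral_congr_ae hX, integral_congr_ae hY]
  refine integral_congr_ae ?_
  filter_upwards [hX, hY] with ω hXω hYω
  rw [hXω, hYω]

variable {E : Type*} [NormedAddCommGroup E]

theorem ae_eq_integral_of_forall_variance_dual_eq_zero [NormedSpace ℝ E] [CompleteSpace E]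
    [SecondCountableTopology E] [IsFiniteMeasure μ] {Y : Ω → E} (hY : MemLp Y 2 μ)
    (h : ∀ L : StrongDual ℝ E, variance (fun ω => L (Y ω)) μ = 0) :
    Y =ᵐ[μ] fun _ => μ[Y] := by
  suffices (fun ω => Y ω - μ[Y]) =ᵐ[μ] 0 by
    filter_upwards [this] with ω hω
    exact sub_eq_zero.1 hω
  refine ae_eq_zero_of_forall_dual ℝ fun L => ?_
  filter_upwards [ae_eq_integral_of_variance_eq_zero (L.comp_memLp' hY) (h L)] with ω hω
  simp only [Function.comp_apply] at hω
  rw [map_sub, hω, L.integral_comp_comm (hY.integrable one_le_two), sub_self, Pi.zero_apply]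

variable [IsProbabilityMeasure μ]

theorem MeasureTheory.Lp.continuous_covariance :
    Continuous fun FG : Lp ℝ 2 μ × Lp ℝ 2 μ => covariance FG.1 FG.2 μ := by
  set one : Lp ℝ 2 μ := indicatorConstLp 2 MeasurableSet.univ (measure_ne_top μ _) 1
  have hmean (F : Lp ℝ 2 μ) : μ[F] = ⟪one, F⟫_ℝ := by
    rw [L2.inner_indicatorConstLp_one, setIntegral_univ]
  have hcov (F G : Lp ℝ 2 μ) : covariance F G μ = ⟪F, G⟫_ℝ - ⟪one, F⟫_ℝ * ⟪one, G⟫_ℝ := by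
    rw [covariance_eq_sub (Lp.memLp F) (Lp.memLp G), ← hmean, ← hmean, L2.inner_def]
    simp only [Pi.mul_apply, RCLike.inner_apply, conj_trivial, mul_comm]
  simp only [hcov]
  fun_prop

theorem Filter.Tendsto.covariance_Lp {ι : Type*} {l : Filter ι} {F G : ι → Lp ℝ 2 μ}
    {F₀ G₀ : Lp ℝ 2 μ} (hF : Tendsto F l (𝓝 F₀)) (hG : Tendsto G l (𝓝 G₀)) :
    Tendsto (fun i => covariance (F i) (G i) μ) l (𝓝 (covariance F₀ G₀ μ)) :=
  (Lp.continuous_covariance.tendsto (F₀, G₀)).comp (hF.prodMk_nhds hG)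

theorem variance_eq_zero_of_tendsto_of_covariance_tendsto_zero {ι : Type*} {l : Filter ι}
    [l.NeBot] {F : ι → Lp ℝ 2 μ} {G : Lp ℝ 2 μ} (hF : Tendsto F l (𝓝 G))
    (hcov : ∀ i, Tendsto (fun j => covariance (F i) (F j) μ) l (𝓝 0)) :
    variance G μ = 0 := by
  have hFG (i : ι) : covariance (F i) G μ = 0 :=
    tendsto_nhds_unique (tendsto_const_nhds.covariance_Lp hF) (hcov i)
  rw [← covariance_self (Lp.memLp G).aestronglyMeasurable.aemeasurable]
  refine tendsto_nhds_unique (tendsto_const_nhds.covariance_Lp hF) ?_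
  simp only [covariance_comm (G : Ω → ℝ), hFG, tendsto_const_nhds]

theorem tendsto_variance_norm {ι : Type*} {l : Filter ι} {F : ι → Lp E 2 μ} {G : Lp E 2 μ}
    (hF : Tendsto F l (𝓝 G)) :
    Tendsto (fun i => variance (fun ω => ‖F i ω‖) μ) l (𝓝 (variance (fun ω => ‖G ω‖) μ)) := by
  let N : Lp E 2 μ → Lp ℝ 2 μ := LipschitzWith.compLp (lipschitzWith_one_norm (E := E)) norm_zero
  have hN (H : Lp E 2 μ) : variance (fun ω => ‖H ω‖) μ = covariance (N H) (N H) μ := by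
    rw [covariance_self (Lp.memLp (N H)).aestronglyMeasurable.aemeasurable]
    exact variance_congr (LipschitzWith.coeFn_compLp _ _ H).symm
  simp only [hN]
  have hNF : Tendsto (fun i => N (F i)) l (𝓝 (N G)) :=
    (LipschitzWith.continuous_compLp _ _).tendsto G |>.comp hF
  exact hNF.covariance_Lp hNF

theorem variance_dual_eq_zero_of_tendsto_of_covariance_tendsto_zero [NormedSpace ℝ E]
    {ι : Type*} {l : Filter ι} [l.NeBot] {F : ι → Lp E 2 μ} {G : Lp E 2 μ}
    (hF : Tendsto F l (𝓝 G)) (L : StrongDual ℝ E)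
    (hcov : ∀ i, Tendsto (fun j => covariance (fun ω => L (F i ω)) (fun ω => L (F j ω)) μ) l
      (𝓝 0)) :
    variance (fun ω => L (G ω)) μ = 0 := by
  rw [variance_congr (L.coeFn_compLp' G).symm]
  refine variance_eq_zero_of_tendsto_of_covariance_tendsto_zero
    ((L.compLpL 2 μ).continuous.tendsto G |>.comp hF) fun i => ?_
  refine (hcov i).congr fun j => covariance_congr ?_ ?_
  · exact (L.coeFn_compLp' (F i)).symm
  · exact (L.coeFn_compLp' (F j)).symm

end Covariance

theorem Filter.Tendsto.liminf_le_of_tendsto_comp {ι α : Type*} {f : Filter ι} [f.NeBot]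
    {g : Filter α} {φ : ι → α} {v : α → ℝ} {a : ℝ} (hφ : Tendsto φ f g)
    (hv : IsBoundedUnder (· ≥ ·) g v) (hlim : Tendsto (v ∘ φ) f (𝓝 a)) :
    liminf v g ≤ a :=
  hlim.liminf_eq ▸ hφ.liminf_le_liminf_comp hlim.isBoundedUnder_le.isCoboundedUnder_flip hv

theorem stmt6_general {Ω : Type*} [MeasurableSpace Ω] (P : Measure Ω) [IsProbabilityMeasure P]
    {E : Type*} [NormedAddCommGroup E] [NormedSpace ℝ E] [CompleteSpace E]
    [SecondCountableTopology E]
    (X : ℝ → Lp E 2 P) (hXcont : Continuous X)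
    (t : ℕ → ℝ)
    (hcov : ∀ (xstar : E →L[ℝ] ℝ) (n : ℕ),
      Tendsto (fun m => cov P (fun ω => xstar (X (t n) ω)) (fun ω => xstar (X (t m) ω)))
        atTop (nhds 0))
    (hvar : 0 < Filter.liminf (fun m => variance (fun ω => ‖X (t m) ω‖) P) atTop) :
    ¬ BohrAlmostPeriodic X := by
  intro hap
  obtain ⟨Y, φ, hφ, hlim⟩ := hap.exists_tendsto_subseq hXcont t
  have hY : ⇑Y =ᵐ[P] fun _ => P[Y] :=
    ae_eq_integral_of_forall_variance_dual_eq_zero (Lp.memLp Y) fun L =>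
      variance_dual_eq_zero_of_tendsto_of_covariance_tendsto_zero hlim L fun k =>
        (hcov L (φ k)).comp hφ.tendsto_atTop
  have hvar_Y : variance (fun ω => ‖Y ω‖) P = 0 := by
    rw [variance_congr (hY.mono fun ω hω => congrArg norm hω), ← covariance_self aemeasurable_const,
      covariance_const_left]
  have hv : Tendsto (fun k => variance (fun ω => ‖X (t (φ k)) ω‖) P) atTop (𝓝 0) :=
    hvar_Y ▸ tendsto_variance_norm hlim
  have hliminf := Tendsto.liminf_le_of_tendsto_comp (v := fun m => variance (fun ω => ‖X (t m) ω‖) P)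
    hφ.tendsto_atTop (isBoundedUnder_of ⟨0, fun m => variance_nonneg _ _⟩) hv
  linarith

/-- Abstract non-almost-periodicity lemma: a continuous `L²`-process with uniformly
integrable squared norms, whose coordinates decorrelate along a sequence `t n → ∞` while
the variances of the norms stay bounded away from `0`, is not mean square almost
periodic. -/
theorem stmt6 {Ω : Type*} [MeasurableSpace Ω] (P : Measure Ω) [IsProbabilityMeasure P]
    {E : Type*} [NormedAddCommGroup E] [NormedSpace ℝ E] [CompleteSpace E]
    [SecondCountableTopology E] [MeasurableSpace E] [BorelSpace E]
    [Fact ((1 : ENNReal) ≤ 2)]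
    (X : ℝ → Lp E 2 P) (hXcont : Continuous X)
    (hui : UnifIntegrable (fun t ω => ‖X t ω‖ ^ 2) 1 P)
    (t : ℕ → ℝ) (htlim : Tendsto t atTop atTop)
    (hcov : ∀ (xstar : E →L[ℝ] ℝ) (n : ℕ),
      Tendsto (fun m => cov P (fun ω => xstar (X (t n) ω)) (fun ω => xstar (X (t m) ω)))
        atTop (nhds 0))
    (hvar : 0 < Filter.liminf (fun m => variance (fun ω => ‖X (t m) ω‖) P) atTop) :
    ¬ BohrAlmostPeriodic X :=
  stmt6_general P X hXcont t hcov hvar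
end
end

section
/- If f : ℝ → M (M a metric space) is almost periodic in Bohr's sense, then for every sequence (t_n) of reals there is a subsequence (t'_n) such that (f(t'_n)) is a Cauchy sequence in M; in particular, if M is complete, (f(t'_n)) converges. -/
open Filter

/-- The range of a continuous Bohr almost periodic function is totally bounded. -/
lemma BohrAlmostPeriodic.totallyBounded_range_s7 {M : Type*} [MetricSpace M] {f : ℝ → M}
    (hcont : Continuous f) (hap : BohrAlmostPeriodic f) :
    TotallyBounded (Set.range f) := by
  rw [Metric.totallyBounded_iff]
  intro ε hε
  obtain ⟨l, hl, hτ⟩ := hap (ε / 2) (by linarith)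
  have hK : IsCompact (f '' Set.Icc 0 l) := (isCompact_Icc).image hcont
  obtain ⟨s, hs⟩ := Metric.totallyBounded_iff.mp hK.totallyBounded (ε / 2) (by linarith)
  refine ⟨s, hs.1, ?_⟩
  rintro _ ⟨x, rfl⟩
  obtain ⟨τ, ⟨hτ1, hτ2⟩, hd⟩ := hτ (-x)
  have hmem : f (x + τ) ∈ f '' Set.Icc 0 l :=
    ⟨x + τ, ⟨by linarith, by linarith⟩, rfl⟩
  obtain ⟨y, hy, hxy⟩ := Set.mem_iUnion₂.mp (hs.2 hmem)
  refine Set.mem_iUnion₂.mpr ⟨y, hy, ?_⟩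
  have h1 := hd x
  have h2 : dist (f (x + τ)) y < ε / 2 := hxy
  calc dist (f x) y ≤ dist (f x) (f (x + τ)) + dist (f (x + τ)) y := dist_triangle _ _ _
    _ < ε := by rw [dist_comm] at h1; linarith

/-- If `f : ℝ → M` is Bohr almost periodic, then every sequence of reals has a
subsequence along which the values of `f` form a Cauchy sequence; in particular if `M`
is complete this subsequence of values converges. -/
theorem stmt7 {M : Type*} [MetricSpace M] (f : ℝ → M)
    (hcont : Continuous f) (hap : BohrAlmostPeriodic f) :
    ∀ t : ℕ → ℝ, ∃ φ : ℕ → ℕ, StrictMono φ ∧ CauchySeq (fun n => f (t (φ n))) ∧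
      (CompleteSpace M → ∃ y : M, Tendsto (fun n => f (t (φ n))) atTop (nhds y)) := by
  intro t
  -- work in the completion of M
  set g : M → UniformSpace.Completion M := (↑)
  have hiso : Isometry g := UniformSpace.Completion.coe_isometry
  have htb : TotallyBounded (g '' Set.range f) :=
    (hap.totallyBounded_range_s7 hcont).image hiso.uniformContinuous
  have hcomp : IsCompact (closure (g '' Set.range f)) :=
    TotallyBounded.isCompact_of_isClosed htb.closure isClosed_closure
  have hmem : ∀ n, g (f (t n)) ∈ closure (g '' Set.range f) := fun n =>
    subset_closure ⟨f (t n), Set.mem_range_self _, rfl⟩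
  obtain ⟨y, -, φ, hφ, hconv⟩ := hcomp.tendsto_subseq hmem
  have hcg : CauchySeq (fun n => g (f (t (φ n)))) := hconv.cauchySeq
  have hc : CauchySeq (fun n => f (t (φ n))) := by
    rw [Metric.cauchySeq_iff] at hcg ⊢
    intro ε hε
    obtain ⟨N, hN⟩ := hcg ε hε
    exact ⟨N, fun m hm n hn => by
      have := hN m hm n hn
      rwa [hiso.dist_eq] at this⟩
  exact ⟨φ, hφ, hc, fun hM => cauchySeq_tendsto_of_complete hc⟩
end
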